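/- arXiv:2011.11144 — 4 statements merged into one kernel-verified Lean document; each statement's English description precedes it below -/
import Mathlib

section
/- Let P be a path graph on vertices v_0, v_1, ..., v_{m-1} (each internal vertex adjacent to its two neighbors, endpoints to one neighbor) whose vertices are colored with n colors such that every pair of distinct colors appears on at least one pair of adjacent vertices. If the two endpoints v_0 and v_{m-1} have the same color c, then color class c contains at least ⌈(n+1)/2⌉ vertices. -/
/-!
Let `C` be the set of positions of colour `c`. Every colour `a ≠ c` must occur next to some
position of `C`, i.e. as the colour of `i + 1` or `i - 1` for some `i ∈ C`. Each position of
`C` has at most two neighbours, and the two endpoints, which both lie in `C`, have only one,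
so at most `2 |C| - 2` colours other than `c` occur; hence `n - 1 ≤ 2 |C| - 2`.
-/

open Finset

section PathColoring

variable {α : Type*} [DecidableEq α] (s : ℕ → α) (m : ℕ) (c : α)

def colorClass : Finset ℕ := (range m).filter (s · = c)

def neighborColors : Finset α :=
  ((colorClass s m c).erase (m - 1)).image (fun i => s (i + 1)) ∪
    ((colorClass s m c).erase 0).image (fun i => s (i - 1))

variable {s m c}

theorem mem_colorClass {i : ℕ} : i ∈ colorClass s m c ↔ i < m ∧ s i = c := by
  simp [colorClass]

theorem mem_neighborColors_of_adjacent {a : α}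
    (h : ∃ i, i + 1 < m ∧ ((s i = c ∧ s (i + 1) = a) ∨ (s i = a ∧ s (i + 1) = c))) :
    a ∈ neighborColors s m c := by
  obtain ⟨i, hi, ⟨hic, hia⟩ | ⟨hia, hic⟩⟩ := h
  · refine mem_union_left _ (mem_image.2 ⟨i, ?_, hia⟩)
    exact mem_erase.2 ⟨by omega, mem_colorClass.2 ⟨by omega, hic⟩⟩
  · refine mem_union_right _ (mem_image.2 ⟨i + 1, ?_, hia⟩)
    exact mem_erase.2 ⟨by omega, mem_colorClass.2 ⟨hi, hic⟩⟩

theorem card_neighborColors_add_two_le (hm : 1 ≤ m) (hc0 : s 0 = c) (hcm : s (m - 1) = c) :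
    #(neighborColors s m c) + 2 ≤ 2 * #(colorClass s m c) := by
  have hfirst : 0 ∈ colorClass s m c := mem_colorClass.2 ⟨hm, hc0⟩
  have hlast : m - 1 ∈ colorClass s m c := mem_colorClass.2 ⟨by omega, hcm⟩
  calc #(neighborColors s m c) + 2
      ≤ #((colorClass s m c).erase (m - 1)) + #((colorClass s m c).erase 0) + 2 := by
        gcongr
        exact (card_union_le _ _).trans (add_le_add card_image_le card_image_le)
    _ = 2 * #(colorClass s m c) := by
        rw [card_erase_of_mem hfirst, card_erase_of_mem hlast]
        have := card_pos.2 ⟨0, hfirst⟩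
        omega

end PathColoring

theorem stmt_6_general (n m : ℕ) (hm : 1 ≤ m) (s : ℕ → Fin n)
    (hcov : ∀ a b : Fin n, a ≠ b → ∃ i : ℕ, i + 1 < m ∧
      ((s i = a ∧ s (i + 1) = b) ∨ (s i = b ∧ s (i + 1) = a)))
    (hend : s 0 = s (m - 1)) :
    (n + 1 + 1) / 2 ≤ ({i : ℕ | i < m ∧ s i = s 0}).ncard := by
  have hclass : {i : ℕ | i < m ∧ s i = s 0} = colorClass s m (s 0) := by
    ext i
    simp [mem_colorClass]
  have hsub : univ.erase (s 0) ⊆ neighborColors s m (s 0) := fun a ha =>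
    mem_neighborColors_of_adjacent (hcov _ _ (ne_of_mem_erase ha).symm)
  have hothers : #(univ.erase (s 0)) = n - 1 := by simp [card_erase_of_mem]
  have hbound := card_neighborColors_add_two_le hm rfl hend.symm
  have := card_le_card hsub
  rw [hclass, Set.ncard_coe_finset]
  omega

/-- If a path on `m` vertices (given by its sequence of colors `s 0, …, s (m-1)` with
`n` colors) covers every pair of distinct colors on some edge, and the endpoints have
the same color, then that color class has at least `⌈(n+1)/2⌉` vertices. -/
theorem stmt_6 (n m : ℕ) (hn : 2 ≤ n) (hm : 1 ≤ m) (s : ℕ → Fin n)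
    (hcov : ∀ a b : Fin n, a ≠ b → ∃ i : ℕ, i + 1 < m ∧
      ((s i = a ∧ s (i + 1) = b) ∨ (s i = b ∧ s (i + 1) = a)))
    (hend : s 0 = s (m - 1)) :
    (n + 1 + 1) / 2 ≤ ({i : ℕ | i < m ∧ s i = s 0}).ncard :=
  stmt_6_general n m hm s hcov hend
end

section
/- Let P be a path graph on m vertices colored with n colors such that every pair of distinct colors appears on some edge. Then m ≥ n(n-1)/2 + 1 if n is odd, and m ≥ n²/2 if n is even. -/
/-!
Contract every edge `s i — s (i + 1)` of the path to an edge of a multigraph on the colors. The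
multigraph has at most `m - 1` edges, and covering all pairs gives every color degree at least
`n - 1`, whence `n (n - 1) ≤ 2 (m - 1)`. The multigraph is traced by a walk, so every color other
than the two end colors has even degree; when `n` is even, `n - 1` is odd, so these degrees are at
least `n`, which improves the count to `n² ≤ 2 (m - 1) + 2`.
-/

open Finset

namespace ColoredPath

variable {α : Type*} [DecidableEq α] (s : ℕ → α) (M : ℕ)

/-- The degree of `c` in the multigraph on colors traced by the path `s 0, …, s M`, loops
dropped. -/
def colorDegree (c : α) : ℕ :=
  #{i ∈ range M | s i ≠ s (i + 1) ∧ (s i = c ∨ s (i + 1) = c)}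

theorem sum_colorDegree_le [Fintype α] : ∑ c, colorDegree s M c ≤ 2 * M := by
  have hedge : ∀ i, ∑ c : α, (if s i ≠ s (i + 1) ∧ (s i = c ∨ s (i + 1) = c) then 1 else 0) ≤ 2 :=
    fun i => calc
      _ ≤ ∑ c : α, ((if s i = c then 1 else 0) + if s (i + 1) = c then 1 else 0) :=
          sum_le_sum fun c _ => by split_ifs <;> simp_all
      _ = 2 := by simp [sum_add_distrib]
  calc ∑ c, colorDegree s M c
      = ∑ i ∈ range M, ∑ c : α,
          (if s i ≠ s (i + 1) ∧ (s i = c ∨ s (i + 1) = c) then 1 else 0) := by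
        simp only [colorDegree, card_filter]
        exact sum_comm
    _ ≤ ∑ _i ∈ range M, 2 := sum_le_sum fun i _ => hedge i
    _ = 2 * M := by simp [mul_comm]

theorem colorDegree_succ (c : α) :
    colorDegree s (M + 1) c = colorDegree s M c +
      if s M ≠ s (M + 1) ∧ (s M = c ∨ s (M + 1) = c) then 1 else 0 := by
  simp only [colorDegree, range_add_one, filter_insert]
  split_ifs <;> simp [card_insert_of_notMem]

/-- Every edge at `c` flips the indicator of `c`, so walking along the path the degree has the
parity of the number of endpoints colored `c`. -/
theorem even_colorDegree_add (c : α) :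
    Even (colorDegree s M c + (if s 0 = c then 1 else 0) + if s M = c then 1 else 0) := by
  induction M with
  | zero => simp [colorDegree]
  | succ M ih =>
    obtain ⟨k, hk⟩ := ih
    rw [colorDegree_succ]
    split_ifs at hk ⊢ <;> first | exact ⟨k, by omega⟩ | exact ⟨k + 1, by omega⟩ | simp_all

variable {s M}

theorem card_sub_one_le_colorDegree [Fintype α]
    (hcov : ∀ a b : α, a ≠ b → ∃ i < M, (s i = a ∧ s (i + 1) = b) ∨ (s i = b ∧ s (i + 1) = a))
    (c : α) : Fintype.card α - 1 ≤ colorDegree s M c := by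
  rw [← card_univ, ← card_erase_of_mem (mem_univ c)]
  refine card_le_card_of_surjOn (fun i => if s i = c then s (i + 1) else s i) fun d hd => ?_
  have hdc : d ≠ c := ne_of_mem_erase hd
  obtain ⟨i, hi, ⟨h, h'⟩ | ⟨h, h'⟩⟩ := hcov c d hdc.symm
  · exact ⟨i, by simp [hi, h, h', hdc.symm], by simp [h, h']⟩
  · exact ⟨i, by simp [hi, h, h', hdc], by simp [h, hdc]⟩

theorem card_mul_card_sub_one_le [Fintype α]
    (hcov : ∀ a b : α, a ≠ b → ∃ i < M, (s i = a ∧ s (i + 1) = b) ∨ (s i = b ∧ s (i + 1) = a)) :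
    Fintype.card α * (Fintype.card α - 1) ≤ 2 * M :=
  calc Fintype.card α * (Fintype.card α - 1) = ∑ _c : α, (Fintype.card α - 1) := by simp
    _ ≤ ∑ c, colorDegree s M c := sum_le_sum fun c _ => card_sub_one_le_colorDegree hcov c
    _ ≤ 2 * M := sum_colorDegree_le s M

theorem card_sq_le_of_even [Fintype α]
    (hcov : ∀ a b : α, a ≠ b → ∃ i < M, (s i = a ∧ s (i + 1) = b) ∨ (s i = b ∧ s (i + 1) = a))
    (heven : Even (Fintype.card α)) : Fintype.card α ^ 2 ≤ 2 * M + 2 := by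
  set n := Fintype.card α
  have hdeg (c : α) :
      n ≤ colorDegree s M c + (if s 0 = c then 1 else 0) + if s M = c then 1 else 0 := by
    have hle := card_sub_one_le_colorDegree hcov c
    obtain ⟨k, hk⟩ := even_colorDegree_add s M c
    obtain ⟨l, hl⟩ := heven
    omega
  calc n ^ 2 = ∑ _c : α, n := by rw [sum_const, card_univ, smul_eq_mul, sq]
    _ ≤ ∑ c, (colorDegree s M c + (if s 0 = c then 1 else 0) + if s M = c then 1 else 0) :=
        sum_le_sum fun c _ => hdeg c
    _ ≤ 2 * M + 2 := by
        simp only [sum_add_distrib, sum_ite_eq, mem_univ, if_true]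
        linarith [sum_colorDegree_le s M]

end ColoredPath

open ColoredPath in
/-- A path on `m` vertices colored with `n` colors covering every pair of distinct
colors on some edge satisfies `m ≥ n(n-1)/2 + 1` when `n` is odd, and `m ≥ n²/2`
when `n` is even. -/
theorem stmt_8 (n m : ℕ) (hn : 2 ≤ n) (s : ℕ → Fin n)
    (hcov : ∀ a b : Fin n, a ≠ b → ∃ i : ℕ, i + 1 < m ∧
      ((s i = a ∧ s (i + 1) = b) ∨ (s i = b ∧ s (i + 1) = a))) :
    (Odd n → n * (n - 1) / 2 + 1 ≤ m) ∧ (Even n → n ^ 2 / 2 ≤ m) := by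
  have hcov' : ∀ a b : Fin n, a ≠ b →
      ∃ i < m - 1, (s i = a ∧ s (i + 1) = b) ∨ (s i = b ∧ s (i + 1) = a) := fun a b hab => by
    obtain ⟨i, hi, h⟩ := hcov a b hab
    exact ⟨i, by omega, h⟩
  have hpos : 2 ≤ n * (n - 1) := by nlinarith [Nat.sub_add_cancel (by omega : 1 ≤ n)]
  refine ⟨fun _ => ?_, fun heven => ?_⟩
  · have := card_mul_card_sub_one_le hcov'
    rw [Fintype.card_fin] at this
    omega
  · have := card_sq_le_of_even hcov' (by rwa [Fintype.card_fin])
    rw [Fintype.card_fin] at this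
    have : 4 ≤ n ^ 2 := by nlinarith
    omega
end

section
/- For every even n ≥ 2, there exists a sequence of length n²/2 with entries in {0,...,n-1} such that for every pair of distinct values a, b in {0,...,n-1}, some two consecutive entries of the sequence are {a, b}. -/
private def zw (n t : ℕ) : ZMod n :=
  if t % 2 = 0 then -((t / 2 : ℕ) : ZMod n) else (((t + 1) / 2 : ℕ) : ZMod n)

private def zs (n i : ℕ) : ZMod n := ((i / n : ℕ) : ZMod n) + zw n (i % n)

private lemma zs_eval (n j t : ℕ) (hn : 0 < n) (ht : t < n) :
    zs n (t + j * n) = (j : ZMod n) + zw n t := by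
  unfold zs
  rw [Nat.add_mul_div_right _ _ hn, Nat.div_eq_of_lt ht, Nat.add_mul_mod_self_right,
    Nat.mod_eq_of_lt ht]
  simp

private lemma key (n m : ℕ) (hnm : n = 2 * m) (hm : 1 ≤ m) (a b : ZMod n) (d : ℕ)
    (hd1 : 1 ≤ d) (hd2 : d < n) (hb : b = a + (d : ZMod n)) (j : ℕ) (hj : j < m)
    (hja : (j : ZMod n) = a + ((d / 2 : ℕ) : ZMod n)) :
    ∃ i : ℕ, i + 1 < n ^ 2 / 2 ∧
      ((zs n i = a ∧ zs n (i + 1) = b) ∨ (zs n i = b ∧ zs n (i + 1) = a)) := by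
  have hn : 0 < n := by omega
  refine ⟨d - 1 + j * n, ?_, ?_⟩
  · have h1 : n ^ 2 / 2 = m * n := by
      subst hnm
      have : (2 * m) ^ 2 = 2 * (m * (2 * m)) := by ring
      rw [this, Nat.mul_div_cancel_left _ two_pos]
    have h2 : j * n + n ≤ m * n := by
      have : (j + 1) * n ≤ m * n := Nat.mul_le_mul_right n hj
      nlinarith
    omega
  · have h1 : d - 1 + j * n + 1 = d + j * n := by omega
    rw [h1, zs_eval n j (d - 1) hn (by omega), zs_eval n j d hn hd2]
    rcases Nat.even_or_odd d with hpar | hpar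
    · -- d even
      have hde : d % 2 = 0 := Nat.even_iff.mp hpar
      have hw1 : zw n (d - 1) = ((d / 2 : ℕ) : ZMod n) := by
        unfold zw
        rw [if_neg (by omega)]
        congr 1
        omega
      have hw2 : zw n d = -((d / 2 : ℕ) : ZMod n) := by
        unfold zw
        rw [if_pos hde]
      have hdd : ((d : ℕ) : ZMod n) = ((d / 2 : ℕ) : ZMod n) + ((d / 2 : ℕ) : ZMod n) := by
        rw [← Nat.cast_add]
        congr 1
        omega
      refine Or.inr ⟨?_, ?_⟩
      · rw [hw1, hja, hb, hdd]; ring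
      · rw [hw2, hja]; ring
    · -- d odd
      have hdo : d % 2 = 1 := Nat.odd_iff.mp hpar
      have hw1 : zw n (d - 1) = -((d / 2 : ℕ) : ZMod n) := by
        unfold zw
        rw [if_pos (by omega)]
        congr 2
        omega
      have hw2 : zw n d = (((d + 1) / 2 : ℕ) : ZMod n) := by
        unfold zw
        rw [if_neg (by omega)]
      have hdd : ((d : ℕ) : ZMod n) = ((d / 2 : ℕ) : ZMod n) + (((d + 1) / 2 : ℕ) : ZMod n) := by
        rw [← Nat.cast_add]
        congr 1
        omega
      refine Or.inl ⟨?_, ?_⟩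
      · rw [hw1, hja]; ring
      · rw [hw2, hja, hb, hdd]; ring

/-- For every even `n ≥ 2` there is a sequence of length `n²/2` over `{0,…,n-1}` in
which every pair of distinct values occurs as a pair of consecutive entries. -/
theorem stmt_10 (n : ℕ) (hn : 2 ≤ n) (he : Even n) :
    ∃ s : ℕ → Fin n, ∀ a b : Fin n, a ≠ b → ∃ i : ℕ, i + 1 < n ^ 2 / 2 ∧
      ((s i = a ∧ s (i + 1) = b) ∨ (s i = b ∧ s (i + 1) = a)) := by
  obtain ⟨k, rfl⟩ : ∃ k, n = k + 2 := ⟨n - 2, by omega⟩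
  obtain ⟨m, hm⟩ := he
  have hnm : k + 2 = 2 * m := by omega
  have hm1 : 1 ≤ m := by omega
  haveI : NeZero (k + 2) := ⟨by omega⟩
  refine ⟨fun i => zs (k + 2) i, ?_⟩
  intro a b hab
  set A : ZMod (k + 2) := a with hA
  set B : ZMod (k + 2) := b with hB
  have hAB : B ≠ A := fun h => hab h.symm
  have hsub : B - A ≠ 0 := sub_ne_zero.mpr hAB
  set d := (B - A).val with hd
  have hd1 : 1 ≤ d := by
    rcases Nat.eq_zero_or_pos d with h | h
    · exact absurd ((ZMod.val_eq_zero _).mp h) hsub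
    · exact h
  have hd2 : d < k + 2 := ZMod.val_lt _
  have hcast : ((d : ℕ) : ZMod (k + 2)) = B - A := ZMod.natCast_rightInverse _
  have hb : B = A + (d : ZMod (k + 2)) := by rw [hcast]; ring
  set J := (A + ((d / 2 : ℕ) : ZMod (k + 2))).val with hJ
  have hJlt : J < k + 2 := ZMod.val_lt _
  have hJcast : ((J : ℕ) : ZMod (k + 2)) = A + ((d / 2 : ℕ) : ZMod (k + 2)) :=
    ZMod.natCast_rightInverse _
  by_cases hJm : J < m
  · obtain ⟨i, h1, h2⟩ := key (k + 2) m hnm hm1 A B d hd1 hd2 hb J hJm hJcast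
    exact ⟨i, h1, h2⟩
  · have hb' : A = B + ((k + 2 - d : ℕ) : ZMod (k + 2)) := by
      have h0 : ((k + 2 - d : ℕ) : ZMod (k + 2)) = -((d : ℕ) : ZMod (k + 2)) := by
        rw [Nat.cast_sub hd2.le, ZMod.natCast_self, zero_sub]
      rw [h0, hb]; ring
    have h2m : (m : ZMod (k + 2)) + m = 0 := by
      rw [← Nat.cast_add, show m + m = k + 2 by omega]
      exact ZMod.natCast_self _
    have hkey : d + (k + 2 - d) / 2 = d / 2 + m := by omega
    have hjcast : ((J - m : ℕ) : ZMod (k + 2)) =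
        B + (((k + 2 - d) / 2 : ℕ) : ZMod (k + 2)) := by
      calc ((J - m : ℕ) : ZMod (k + 2)) = (J : ZMod (k + 2)) - m := by
            rw [Nat.cast_sub (by omega)]
        _ = A + ((d / 2 : ℕ) : ZMod (k + 2)) - m := by rw [hJcast]
        _ = A + ((d / 2 : ℕ) : ZMod (k + 2)) + m - ((m : ZMod (k + 2)) + m) := by ring
        _ = A + (((d / 2 : ℕ) : ZMod (k + 2)) + m) := by rw [h2m]; ring
        _ = A + ((d / 2 + m : ℕ) : ZMod (k + 2)) := by push_cast; ring
        _ = A + ((d + (k + 2 - d) / 2 : ℕ) : ZMod (k + 2)) := by rw [hkey]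
        _ = A + (d : ZMod (k + 2)) + (((k + 2 - d) / 2 : ℕ) : ZMod (k + 2)) := by
            push_cast; ring
        _ = B + (((k + 2 - d) / 2 : ℕ) : ZMod (k + 2)) := by rw [hb]
    obtain ⟨i, h1, h2⟩ := key (k + 2) m hnm hm1 B A (k + 2 - d) (by omega) (by omega)
      hb' (J - m) (by omega) hjcast
    exact ⟨i, h1, h2.symm⟩
end

section
/- Let A be a list of n elements of a linear order, not necessarily distinct, and define a tie-breaking comparison: i beats k iff A[k] < A[i], or A[k] = A[i] and k < i. Then the rank function rank(i) = |{k ≠ i : i beats k}| is a bijection from {0,...,n-1} onto {0,...,n-1}. -/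
/-!
Tie-breaking by index makes `i ↦ (A i, i)` injective into the lexicographic order on `α × Fin n`,
and `i` beats `k` exactly when `(A k, k)` lies below `(A i, i)` there. Ranking by an injective map
into a linear order is strictly monotone along that order, hence injective; every rank is less
than `n` because `i` never beats itself; and an injective map between two sets of size `n` is onto.
-/

open Finset

section Rank

variable {ι β : Type*} [Fintype ι]

def rankBy [Preorder β] [DecidableLT β] (f : ι → β) (i : ι) : ℕ := #{k | f k < f i}

section Preorder

variable [Preorder β] [DecidableLT β] (f : ι → β)

theorem rankBy_lt_card (i : ι) : rankBy f i < Fintype.card ι := by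
  refine card_lt_univ_of_notMem (x := i) ?_
  simp

theorem rankBy_lt_rankBy {i j : ι} (hij : f i < f j) : rankBy f i < rankBy f j := by
  refine card_lt_card ⟨fun k hk => ?_, fun hsub => ?_⟩
  · simp only [mem_filter, mem_univ, true_and] at hk ⊢
    exact hk.trans hij
  · simpa using hsub (by simpa using hij : i ∈ ({k | f k < f j} : Finset ι))

end Preorder

theorem rankBy_injective [LinearOrder β] {f : ι → β} (hf : Function.Injective f) :
    Function.Injective (rankBy f) := by
  intro i j hrank
  by_contra hne
  rcases lt_or_gt_of_ne (hf.ne hne) with hlt | hlt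
  · exact (rankBy_lt_rankBy f hlt).ne hrank
  · exact (rankBy_lt_rankBy f hlt).ne' hrank

theorem bijOn_rankBy [LinearOrder β] {f : ι → β} (hf : Function.Injective f) :
    Set.BijOn (rankBy f) Set.univ (Set.Iio (Fintype.card ι)) := by
  have hmaps : Set.MapsTo (rankBy f) Set.univ (Set.Iio (Fintype.card ι)) :=
    fun i _ => rankBy_lt_card f i
  have hinj : Set.InjOn (rankBy f) Set.univ := (rankBy_injective hf).injOn
  refine ⟨hmaps, hinj, ?_⟩
  have hsurj := Finset.surjOn_of_injOn_of_card_le (s := univ) (t := range (Fintype.card ι))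
    (rankBy f) (by simpa using hmaps) (by simpa using hinj) (by simp)
  simpa using hsurj

end Rank

/-- With the tie-breaking comparison `i beats k ↔ A k < A i ∨ (A k = A i ∧ k < i)`,
the rank function `rank i = #{k | i beats k}` is a bijection from `{0,…,n-1}` onto
`{0,…,n-1}`, even when `A` has repeated values. -/
theorem stmt_14 {α : Type*} [LinearOrder α] (n : ℕ) (A : Fin n → α) :
    Set.BijOn (fun i : Fin n =>
        (Finset.univ.filter fun k : Fin n => A k < A i ∨ (A k = A i ∧ k < i)).card)
      Set.univ (Set.Iio n) := by
  let f : Fin n → α ×ₗ Fin n := fun i => toLex (A i, i)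
  have hf : Function.Injective f := fun i j h => congrArg Prod.snd (toLex.injective h)
  have hrank : (fun i : Fin n =>
      (Finset.univ.filter fun k : Fin n => A k < A i ∨ (A k = A i ∧ k < i)).card) = rankBy f := by
    ext i
    simp only [rankBy, f, Prod.Lex.toLex_lt_toLex]
  simpa [hrank] using bijOn_rankBy hf
end
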